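/- arXiv:math/0501440 — 3 statements merged into one kernel-verified Lean document; each statement's English description precedes it below -/
import Mathlib

section
/- Let P be a semi-isotropic transition matrix on DL(q,r) with projection P₁ on V_q. A function h₁ : V_q → ℝ is P₁-harmonic if and only if the function h defined on DL(q,r) by h(x₁x₂) = h₁(x₁) is P-harmonic. -/
open Filter Topology ENNReal

/-! ### Generic Markov chain notions -/

/-- `p` is a transition matrix: nonnegative entries, rows summing to `1`. -/
def IsTransMat {X : Type*} (p : X → X → ℝ) : Prop :=
  (∀ x y, 0 ≤ p x y) ∧ ∀ x, HasSum (fun y => p x y) 1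

open Classical in
/-- `n`-step transition probabilities. -/
noncomputable def pstep {X : Type*} (p : X → X → ℝ) : ℕ → X → X → ℝ
  | 0, x, y => if x = y then 1 else 0
  | n + 1, x, y => ∑' z, pstep p n x z * p z y

/-- Irreducibility: any state can be reached from any state. -/
def IsIrredMat {X : Type*} (p : X → X → ℝ) : Prop :=
  ∀ x y, ∃ n : ℕ, 0 < pstep p n x y

/-- Green kernel, valued in `[0,∞]`. -/
noncomputable def Green {X : Type*} (p : X → X → ℝ) (x y : X) : ℝ≥0∞ :=
  ∑' n : ℕ, ENNReal.ofReal (pstep p n x y)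

/-- Transience: the Green kernel is everywhere finite. -/
def IsTransient {X : Type*} (p : X → X → ℝ) : Prop :=
  ∀ x y, Green p x y ≠ ⊤

/-- Martin kernel with respect to a root `o`. -/
noncomputable def Martin {X : Type*} (p : X → X → ℝ) (o x y : X) : ℝ :=
  (Green p x y).toReal / (Green p o y).toReal

/-- Harmonic function: `∑_y p(x,y) h(y)` converges (absolutely) to `h(x)` for all `x`. -/
def IsHarmonic {X : Type*} (p : X → X → ℝ) (h : X → ℝ) : Prop :=
  ∀ x, HasSum (fun y => p x y * h y) (h x)

/-- Minimal positive harmonic function, normalized at the root `o`. -/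
def IsMinimalHarmonic {X : Type*} (p : X → X → ℝ) (o : X) (h : X → ℝ) : Prop :=
  IsHarmonic p h ∧ (∀ x, 0 < h x) ∧ h o = 1 ∧
    ∀ h₁ : X → ℝ, IsHarmonic p h₁ → (∀ x, 0 < h₁ x) → (∀ x, h₁ x ≤ h x) →
      ∃ c : ℝ, ∀ x, h₁ x = c * h x

/-! ### The homogeneous tree `T_q` -/

/-- Finitely supported configurations `ℕ → ℤ/qℤ`. -/
def Conf (q : ℕ) : Type := {σ : ℕ → ZMod q // (Function.support σ).Finite}

/-- Vertex set of the homogeneous tree `T_q`: `Σ_q × ℤ`. -/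
def V (q : ℕ) : Type := Conf q × ℤ

/-- Horocycle index of a vertex. -/
def hor {q : ℕ} (x : V q) : ℤ := x.2

/-- The confluent level `k̄` of two vertices. -/
noncomputable def kbar {q : ℕ} (x y : V q) : ℤ :=
  sSup {ℓ : ℤ | ℓ ≤ min x.2 y.2 ∧
    ∀ m : ℕ, x.1.1 ((x.2 - ℓ).toNat + m) = y.1.1 ((y.2 - ℓ).toNat + m)}

/-- `up(x,y) = hor(x) - k̄(x,y)`. -/
noncomputable def up {q : ℕ} (x y : V q) : ℤ := x.2 - kbar x y

/-- Graph distance on the tree: `d(x,y) = up(x,y) + up(y,x)`. -/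
noncomputable def tdist {q : ℕ} (x y : V q) : ℤ := up x y + up y x

/-- The zero configuration. -/
def zeroConf (q : ℕ) : Conf q :=
  ⟨fun _ => 0, Set.Finite.subset (Set.finite_empty) (by simp [Function.support])⟩

/-- Root vertex `o = (0,0)` of the tree. -/
def troot (q : ℕ) : V q := (zeroConf q, 0)

/-- Semi-isotropic transition matrix on the tree: `p(x,y)` depends only on
`(up(x,y), up(y,x))`. -/
def SemiIsoTree {q : ℕ} (p : V q → V q → ℝ) : Prop :=
  ∀ x y x' y' : V q, up x y = up x' y' → up y x = up y' x' → p x y = p x' y'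

/-- The boundary `∂*T_q`: two-sided sequences vanishing at all sufficiently
small indices. -/
def Bdry (q : ℕ) : Type := {ξ : ℤ → ZMod q // ∃ N : ℤ, ∀ n ≤ N, ξ n = 0}

/-- The confluent level `k̄(x,ξ)` of a vertex and a boundary point. -/
noncomputable def kbarB {q : ℕ} (x : V q) (ξ : Bdry q) : ℤ :=
  sSup {ℓ : ℤ | ℓ ≤ x.2 ∧ ∀ n : ℤ, n ≤ ℓ → x.1.1 ((x.2 - n).toNat) = ξ.1 n}

/-- `up(x,ξ) = hor(x) - k̄(x,ξ)`. -/
noncomputable def upB {q : ℕ} (x : V q) (ξ : Bdry q) : ℤ := x.2 - kbarB x ξ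

/-- A sequence of vertices converges to the boundary point `ξ ∈ ∂*T_q`. -/
def TendsToBdry {q : ℕ} (y : ℕ → V q) (ξ : Bdry q) : Prop :=
  Tendsto (fun n => kbarB (y n) ξ) atTop atTop

/-- A sequence of vertices converges to the distinguished end `ω`. -/
def TendsToOmega {q : ℕ} (y : ℕ → V q) : Prop :=
  Tendsto (fun n => up (troot q) (y n)) atTop atTop

open Classical in
/-- The projected measure `μ̃` on `ℤ`: `μ̃(n) = ∑_{y : hor(y) = n} p(o,y)`. -/
noncomputable def muTilde {q : ℕ} (p : V q → V q → ℝ) (n : ℤ) : ℝ :=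
  ∑' y : V q, if hor y = n then p (troot q) y else 0

/-! ### The Diestel–Leader graph `DL(q,r)` -/

/-- Vertex set of the Diestel–Leader graph `DL(q,r)`. -/
def DL (q r : ℕ) : Type := {z : V q × V r // hor z.1 + hor z.2 = 0}

/-- Root vertex `o = o₁o₂` of `DL(q,r)`. -/
def rootDL (q r : ℕ) : DL q r := ⟨(troot q, troot r), by simp [hor, troot]⟩

/-- A kernel on `DL(q,r)` is semi-isotropic if it depends only on the quadruple
`(up(x₁,y₁), up(y₁,x₁), up(x₂,y₂), up(y₂,x₂))`. -/
def SemiIsoDL {q r : ℕ} {α : Type*} (κ : DL q r → DL q r → α) : Prop :=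
  ∀ x y x' y' : DL q r,
    up x.1.1 y.1.1 = up x'.1.1 y'.1.1 → up y.1.1 x.1.1 = up y'.1.1 x'.1.1 →
    up x.1.2 y.1.2 = up x'.1.2 y'.1.2 → up y.1.2 x.1.2 = up y'.1.2 x'.1.2 →
    κ x y = κ x' y'

/-- A canonical vertex of `DL(q,r)` with prescribed first coordinate. -/
def dlmk1 {q r : ℕ} (x₁ : V q) : DL q r :=
  ⟨(x₁, (zeroConf r, -hor x₁)), by simp [hor]⟩

/-- A canonical vertex of `DL(q,r)` with prescribed second coordinate. -/
def dlmk2 {q r : ℕ} (x₂ : V r) : DL q r :=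
  ⟨((zeroConf q, -hor x₂), x₂), by simp [hor]⟩

open Classical in
/-- Projection `P₁` of a transition matrix on `DL(q,r)` to the tree `T_q`:
`p₁(x₁,y₁) = ∑_{y₂ : y₁y₂ ∈ DL(q,r)} p(x₁x₂, y₁y₂)` (independent of the choice
of `x₂` with `x₁x₂ ∈ DL(q,r)` when `p` is semi-isotropic). -/
noncomputable def proj1 {q r : ℕ} (p : DL q r → DL q r → ℝ) (x₁ y₁ : V q) : ℝ :=
  ∑' y : DL q r, if y.1.1 = y₁ then p (dlmk1 x₁) y else 0

open Classical in
/-- Projection `P₂` of a transition matrix on `DL(q,r)` to the tree `T_r`. -/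
noncomputable def proj2 {q r : ℕ} (p : DL q r → DL q r → ℝ) (x₂ y₂ : V r) : ℝ :=
  ∑' y : DL q r, if y.1.2 = y₂ then p (dlmk2 x₂) y else 0

/-- Graph distance on `DL(q,r)`:
`d(x,y) = d(x₁,y₁) + d(x₂,y₂) - |hor(x₁) - hor(y₁)|`. -/
noncomputable def dDL {q r : ℕ} (x y : DL q r) : ℤ :=
  tdist x.1.1 y.1.1 + tdist x.1.2 y.1.2 - |hor x.1.1 - hor y.1.1|

section AuxLift

variable {q r : ℕ}

/-- Horocycle-preserving "lamp addition" map on the tree. -/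
def shiftV (g : ℤ → ZMod r) (N : ℤ) (hg : ∀ n < N, g n = 0) (x : V r) : V r :=
  (⟨fun j => x.1.1 j + g (x.2 - j), by
      apply Set.Finite.subset (x.1.2.union (Set.finite_Iic (x.2 - N).toNat))
      intro j hj
      simp only [Function.mem_support] at hj
      by_cases h : x.1.1 j = 0
      · have hgj : g (x.2 - j) ≠ 0 := by
          intro h0; apply hj; simp [h, h0]
        have hN : N ≤ x.2 - j := le_of_not_gt fun hlt => hgj (hg _ hlt)
        right
        simp only [Set.mem_Iic]
        omega
      · exact Or.inl h⟩, x.2)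

lemma shiftV_snd (g : ℤ → ZMod r) (N : ℤ) (hg : ∀ n < N, g n = 0) (x : V r) :
    (shiftV g N hg x).2 = x.2 := rfl

lemma shiftV_shiftV_neg (g : ℤ → ZMod r) (N : ℤ) (hg : ∀ n < N, g n = 0)
    (hg' : ∀ n < N, -g n = 0) (x : V r) :
    shiftV (fun n => -g n) N hg' (shiftV g N hg x) = x := by
  unfold shiftV
  exact Prod.ext (Subtype.ext (funext fun j => by simp)) rfl

lemma shiftV_neg_shiftV (g : ℤ → ZMod r) (N : ℤ) (hg : ∀ n < N, g n = 0)
    (hg' : ∀ n < N, -g n = 0) (x : V r) :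
    shiftV g N hg (shiftV (fun n => -g n) N hg' x) = x := by
  unfold shiftV
  exact Prod.ext (Subtype.ext (funext fun j => by simp)) rfl

lemma kbar_shiftV (g : ℤ → ZMod r) (N : ℤ) (hg : ∀ n < N, g n = 0) (x y : V r) :
    kbar (shiftV g N hg x) (shiftV g N hg y) = kbar x y := by
  unfold kbar shiftV
  congr 1
  ext ℓ
  simp only [Set.mem_setOf_eq]
  constructor
  · rintro ⟨h1, h2⟩
    refine ⟨h1, fun m => ?_⟩
    have h2m := h2 m
    have hℓx : ℓ ≤ x.2 := le_trans h1 (min_le_left _ _)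
    have hℓy : ℓ ≤ y.2 := le_trans h1 (min_le_right _ _)
    have hx : x.2 - (((x.2 - ℓ).toNat : ℤ) + m) = ℓ - m := by omega
    have hy : y.2 - (((y.2 - ℓ).toNat : ℤ) + m) = ℓ - m := by omega
    push_cast at h2m
    rw [hx, hy] at h2m
    exact add_right_cancel h2m
  · rintro ⟨h1, h2⟩
    refine ⟨h1, fun m => ?_⟩
    have h2m := h2 m
    have hℓx : ℓ ≤ x.2 := le_trans h1 (min_le_left _ _)
    have hℓy : ℓ ≤ y.2 := le_trans h1 (min_le_right _ _)
    have hx : x.2 - (((x.2 - ℓ).toNat : ℤ) + m) = ℓ - m := by omega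
    have hy : y.2 - (((y.2 - ℓ).toNat : ℤ) + m) = ℓ - m := by omega
    push_cast
    rw [hx, hy, h2m]

lemma up_shiftV (g : ℤ → ZMod r) (N : ℤ) (hg : ∀ n < N, g n = 0) (x y : V r) :
    up (shiftV g N hg x) (shiftV g N hg y) = up x y := by
  unfold up
  rw [kbar_shiftV, shiftV_snd]

/-- The corresponding map on `DL(q,r)`. -/
def shiftDL (g : ℤ → ZMod r) (N : ℤ) (hg : ∀ n < N, g n = 0) : DL q r ≃ DL q r where
  toFun z := ⟨(z.1.1, shiftV g N hg z.1.2), z.2⟩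
  invFun z := ⟨(z.1.1, shiftV (fun n => -g n) N (fun n hn => by simp [hg n hn]) z.1.2), z.2⟩
  left_inv z := Subtype.ext (Prod.ext rfl
    (shiftV_shiftV_neg g N hg (fun n hn => by simp [hg n hn]) z.1.2))
  right_inv z := Subtype.ext (Prod.ext rfl
    (shiftV_neg_shiftV g N hg (fun n hn => by simp [hg n hn]) z.1.2))

lemma p_shiftDL (p : DL q r → DL q r → ℝ) (hsi : SemiIsoDL p)
    (g : ℤ → ZMod r) (N : ℤ) (hg : ∀ n < N, g n = 0) (x y : DL q r) :
    p (shiftDL g N hg x) (shiftDL g N hg y) = p x y :=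
  hsi _ _ x y rfl rfl (up_shiftV g N hg _ _) (up_shiftV g N hg _ _)

open Classical in
lemma proj1_eq (p : DL q r → DL q r → ℝ) (hsi : SemiIsoDL p) (x : DL q r) (y₁ : V q) :
    (∑' y : DL q r, if y.1.1 = y₁ then p x y else 0) = proj1 p x.1.1 y₁ := by
  classical
  set σ : Conf r := x.1.2.1 with hσ
  set k : ℤ := x.1.2.2 with hk
  obtain ⟨M, hM⟩ : ∃ M : ℕ, ∀ j, M < j → σ.1 j = 0 := by
    obtain ⟨M, hM⟩ := σ.2.bddAbove
    exact ⟨M, fun j hj => by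
      by_contra h
      exact absurd (hM (Function.mem_support.mpr h)) (not_le.mpr hj)⟩
  set g : ℤ → ZMod r := fun n => if n ≤ k then -σ.1 ((k - n).toNat) else 0 with hgdef
  have hg : ∀ n < k - M, g n = 0 := by
    intro n hn
    simp only [hgdef]
    rw [if_pos (by omega)]
    rw [hM ((k - n).toNat) (by omega)]
    simp
  set Φ : DL q r ≃ DL q r := shiftDL g (k - M) hg with hΦ
  have hΦfst : ∀ y : DL q r, (Φ y).1.1 = y.1.1 := fun y => rfl
  have hΦx : Φ x = dlmk1 x.1.1 := by
    refine Subtype.ext (Prod.ext rfl ?_)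
    show shiftV g (k - M) hg x.1.2 = (zeroConf r, -hor x.1.1)
    have hlvl : k = -hor x.1.1 := by
      have := x.2
      simp only [hor] at this ⊢
      omega
    unfold shiftV
    refine Prod.ext (Subtype.ext (funext fun j => ?_)) hlvl
    show σ.1 j + g (k - j) = (zeroConf r).1 j
    have hjj : (k - (k - (j : ℤ))).toNat = j := by omega
    have : g (k - j) = -σ.1 j := by
      simp only [hgdef]
      rw [if_pos (by omega : k - (j : ℤ) ≤ k), hjj]
    rw [this]
    simp [zeroConf]
  calc (∑' y : DL q r, if y.1.1 = y₁ then p x y else 0)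
      = ∑' y : DL q r, if (Φ y).1.1 = y₁ then p (dlmk1 x.1.1) (Φ y) else 0 := by
        congr 1
        funext y
        rw [hΦfst, ← hΦx, p_shiftDL p hsi]
    _ = ∑' y : DL q r, if y.1.1 = y₁ then p (dlmk1 x.1.1) y else 0 :=
        Φ.tsum_eq fun y => if y.1.1 = y₁ then p (dlmk1 x.1.1) y else 0
    _ = proj1 p x.1.1 y₁ := rfl

lemma proj1_nonneg (p : DL q r → DL q r → ℝ) (hp : IsTransMat p) (x₁ y₁ : V q) :
    0 ≤ proj1 p x₁ y₁ := by
  apply tsum_nonneg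
  intro y
  split
  · exact hp.1 _ _
  · exact le_refl 0

lemma hasSum_fiber (p : DL q r → DL q r → ℝ) (hp : IsTransMat p) (hsi : SemiIsoDL p)
    (f : V q → ℝ) (x : DL q r) (y₁ : V q) :
    HasSum (fun z : {y : DL q r // y.1.1 = y₁} => p x z.1 * f z.1.1.1)
      (proj1 p x.1.1 y₁ * f y₁) := by
  classical
  have hsub : Summable (fun z : {y : DL q r // y.1.1 = y₁} => p x z.1) :=
    (hp.2 x).summable.subtype _
  have htsum : ∑' z : {y : DL q r // y.1.1 = y₁}, p x z.1 = proj1 p x.1.1 y₁ := by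
    rw [← proj1_eq p hsi x y₁]
    rw [show (∑' y : DL q r, if y.1.1 = y₁ then p x y else 0)
        = ∑' y : DL q r, Set.indicator {y : DL q r | y.1.1 = y₁} (p x) y from
      tsum_congr fun y => by by_cases h : y.1.1 = y₁ <;> simp [Set.indicator_apply, h]]
    exact tsum_subtype {y : DL q r | y.1.1 = y₁} (p x)
  have h1 : HasSum (fun z : {y : DL q r // y.1.1 = y₁} => p x z.1) (proj1 p x.1.1 y₁) :=
    htsum ▸ hsub.hasSum
  have h2 := h1.mul_right (f y₁)
  refine h2.congr_fun fun z => ?_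
  rw [z.2]

end AuxLift

/-- For a semi-isotropic transition matrix `P` on `DL(q,r)` with
projection `P₁` on `V_q`, a function `h₁` on `V_q` is `P₁`-harmonic iff its lift
`x₁x₂ ↦ h₁(x₁)` is `P`-harmonic. -/
theorem harmonic_lift_iff (q r : ℕ) (hq : 2 ≤ q) (hr : 2 ≤ r)
    (p : DL q r → DL q r → ℝ) (hp : IsTransMat p) (hsi : SemiIsoDL p)
    (h₁ : V q → ℝ) :
    IsHarmonic (proj1 p) h₁ ↔ IsHarmonic p (fun x => h₁ x.1.1) := by
  classical
  let e : (Σ y₁ : V q, {y : DL q r // y.1.1 = y₁}) ≃ DL q r :=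
    Equiv.sigmaFiberEquiv (fun y : DL q r => y.1.1)
  constructor
  · intro hH x
    set x₁ := x.1.1 with hx₁def
    have hfib : ∀ y₁ : V q, HasSum (fun z : {y : DL q r // y.1.1 = y₁} => p x z.1 * h₁ z.1.1.1)
        (proj1 p x₁ y₁ * h₁ y₁) := fun y₁ => hasSum_fiber p hp hsi h₁ x y₁
    have hfibabs : ∀ y₁ : V q,
        HasSum (fun z : {y : DL q r // y.1.1 = y₁} => |p x z.1 * h₁ z.1.1.1|)
        (proj1 p x₁ y₁ * |h₁ y₁|) := by
      intro y₁
      have h := hasSum_fiber p hp hsi (fun v => |h₁ v|) x y₁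
      have heq : (fun z : {y : DL q r // y.1.1 = y₁} => |p x z.1 * h₁ z.1.1.1|)
          = fun z => p x z.1 * |h₁ z.1.1.1| :=
        funext fun z => by rw [abs_mul, abs_of_nonneg (hp.1 x z.1)]
      rw [heq]
      exact h
    have habs : Summable (fun y₁ : V q => proj1 p x₁ y₁ * |h₁ y₁|) := by
      have hs := (hH x₁).summable.abs
      refine hs.congr fun y₁ => ?_
      rw [abs_mul, abs_of_nonneg (proj1_nonneg p hp x₁ y₁)]
    have hsig : Summable (fun s : (Σ y₁ : V q, {y : DL q r // y.1.1 = y₁}) =>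
        |p x s.2.1 * h₁ s.2.1.1.1|) := by
      rw [summable_sigma_of_nonneg (fun s => abs_nonneg _)]
      refine ⟨fun y₁ => (hfibabs y₁).summable, ?_⟩
      refine habs.congr fun y₁ => ?_
      exact ((hfibabs y₁).tsum_eq).symm
    have hFe : Summable (fun s : (Σ y₁ : V q, {y : DL q r // y.1.1 = y₁}) =>
        p x s.2.1 * h₁ s.2.1.1.1) := hsig.of_abs
    have hF : Summable (fun y : DL q r => p x y * h₁ y.1.1) := by
      rw [← e.summable_iff]
      exact hFe
    have hFs : HasSum (fun y : DL q r => p x y * h₁ y.1.1)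
        (∑' y : DL q r, p x y * h₁ y.1.1) := hF.hasSum
    have hgrp : HasSum (fun y₁ : V q => proj1 p x₁ y₁ * h₁ y₁)
        (∑' y : DL q r, p x y * h₁ y.1.1) :=
      (e.hasSum_iff.mpr hFs).sigma hfib
    have hval : (∑' y : DL q r, p x y * h₁ y.1.1) = h₁ x₁ := hgrp.unique (hH x₁)
    exact (show HasSum (fun y : DL q r => p x y * h₁ y.1.1) (h₁ x₁) from hval ▸ hFs)
  · intro hH x₁
    have h := hH (dlmk1 x₁)
    have hs : HasSum ((fun y : DL q r => p (dlmk1 x₁) y * h₁ y.1.1) ∘ e) (h₁ x₁) :=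
      e.hasSum_iff.mpr h
    exact hs.sigma fun y₁ => hasSum_fiber p hp hsi h₁ (dlmk1 x₁) y₁
end

section
/- Let P be a semi-isotropic transition matrix on DL(q,r). Then for every n ≥ 0 the n-step transition probability p^{(n)}(x,y) depends only on the quadruple (up(x₁,y₁), up(y₁,x₁), up(x₂,y₂), up(y₂,x₂)), and consequently the Green kernel G(x,y) = ∑_{n≥0} p^{(n)}(x,y) ∈ [0,∞] also depends only on this quadruple. In particular, if x = x₁x₂, v = v₁x₂ ∈ DL(q,r) with hor(x₁) = hor(v₁), and y = y₁y₂ ∈ DL(q,r) satisfies up(x₁,y₁) > up(x₁,v₁), then G(x,y) = G(v,y). -/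
open Filter Topology ENNReal

/-!
The automorphisms of `T_q` fixing the end `ω` act transitively on pairs `(a, b)` with prescribed
`(up(a,b), up(b,a))`: a translation moves `a` to `a'`, and then, one level at a time, swapping two
digits on the branch of `b` moves `b` to `b'` while fixing `a`. Pairs of such automorphisms with
opposite horocycle shifts act on `DL(q,r)`, transitively on pairs with a prescribed quadruple of
`up`-values. A semi-isotropic `P` is invariant under them, hence so are all `p⁽ⁿ⁾` and `G`, which
is semi-isotropy again. Finally, `up(x₁,y₁) > up(x₁,v₁)` puts the confluent of `x₁` and `y₁`
strictly beyond that of `x₁` and `v₁` on the ray from `x₁` to `ω`, so it is also the confluent of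
`v₁` and `y₁`, and `(x,y)`, `(v,y)` have the same quadruple.
-/

section Markov

variable {X : Type*} {p : X → X → ℝ} {Φ : X ≃ X}

theorem pstep_apply_equiv (hΦ : ∀ x y, p (Φ x) (Φ y) = p x y) (n : ℕ) (x y : X) :
    pstep p n (Φ x) (Φ y) = pstep p n x y := by
  induction n generalizing y with
  | zero => classical exact if_congr Φ.injective.eq_iff rfl rfl
  | succ n ih =>
    simp only [pstep]
    rw [← Φ.tsum_eq]
    simp only [ih, hΦ]

theorem green_apply_equiv (hΦ : ∀ x y, p (Φ x) (Φ y) = p x y) (x y : X) :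
    Green p (Φ x) (Φ y) = Green p x y := by
  simp only [Green, pstep_apply_equiv hΦ]

end Markov

namespace V

variable {q : ℕ}

/-- The digit of `x` at level `j`: `x.1.1 n` sits at level `hor x - n`, and levels above `hor x`
carry `0`. -/
def digit (x : V q) (j : ℤ) : ZMod q :=
  if j ≤ x.2 then x.1.1 (x.2 - j).toNat else 0

lemma digit_of_lt {x : V q} {j : ℤ} (h : x.2 < j) : x.digit j = 0 :=
  if_neg (not_le.2 h)

lemma digit_sub_natCast (x : V q) (n : ℕ) : x.digit (x.2 - n) = x.1.1 n := by
  rw [digit, if_pos (by omega), show (x.2 - (x.2 - n)).toNat = n by omega]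

lemma ext_digit {x y : V q} (h₂ : x.2 = y.2) (h : ∀ j ≤ y.2, x.digit j = y.digit j) :
    x = y := by
  refine Prod.ext (Subtype.ext (funext fun n => ?_)) h₂
  rw [← digit_sub_natCast x, ← digit_sub_natCast y, h₂]
  exact h _ (by omega)

lemma finite_support_digit (x : V q) : (Function.support x.digit).Finite := by
  refine (x.1.2.image fun n : ℕ => x.2 - n).subset fun j hj => ?_
  have hjx : j ≤ x.2 := not_lt.1 fun h => hj (digit_of_lt h)
  refine ⟨(x.2 - j).toNat, ?_, show x.2 - ((x.2 - j).toNat : ℤ) = j by omega⟩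
  rwa [Function.mem_support, digit, if_pos hjx] at hj

def mk (f : ℤ → ZMod q) (hf : (Function.support f).Finite) (k : ℤ) : V q :=
  (⟨fun n => f (k - n), hf.preimage fun _ _ _ _ h => by simpa using h⟩, k)

lemma digit_mk {f : ℤ → ZMod q} {hf : (Function.support f).Finite} {k j : ℤ} (hj : j ≤ k) :
    (mk f hf k).digit j = f j := by
  change (if j ≤ k then f (k - ((k - j).toNat : ℕ)) else 0) = f j
  rw [if_pos hj, show k - ((k - j).toNat : ℕ) = j by omega]

lemma le_kbar_iff {x y : V q} {ℓ : ℤ} :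
    ℓ ≤ kbar x y ↔ ℓ ≤ min x.2 y.2 ∧ ∀ j ≤ ℓ, x.digit j = y.digit j := by
  set S := {ℓ : ℤ | ℓ ≤ min x.2 y.2 ∧
    ∀ m : ℕ, x.1.1 ((x.2 - ℓ).toNat + m) = y.1.1 ((y.2 - ℓ).toNat + m)}
  have mem_S : ∀ ℓ, ℓ ∈ S ↔ ℓ ≤ min x.2 y.2 ∧ ∀ j ≤ ℓ, x.digit j = y.digit j := by
    refine fun ℓ => and_congr_right fun hℓ => ⟨fun h j hj => ?_, fun h m => ?_⟩
    · have := h (ℓ - j).toNat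
      rw [← digit_sub_natCast x, ← digit_sub_natCast y] at this
      convert this using 2 <;> omega
    · have := h (ℓ - m) (by omega)
      rw [← digit_sub_natCast x, ← digit_sub_natCast y]
      convert this using 2 <;> omega
  have hbdd : BddAbove S := ⟨min x.2 y.2, fun _ h => h.1⟩
  have hne : S.Nonempty := by
    obtain ⟨b, hb⟩ := (x.finite_support_digit.union y.finite_support_digit).bddBelow
    refine ⟨min (min x.2 y.2) (b - 1), (mem_S _).2 ⟨min_le_left _ _, fun j hj => ?_⟩⟩
    have hjb : j < b := by omega
    rw [Function.notMem_support.1 fun h => (hb (Or.inl h)).not_gt hjb,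
      Function.notMem_support.1 fun h => (hb (Or.inr h)).not_gt hjb]
  change ℓ ≤ sSup S ↔ _
  refine ⟨fun h => ?_, fun h => le_csSup hbdd ((mem_S ℓ).2 h)⟩
  obtain ⟨h₁, h₂⟩ := (mem_S _).1 (Int.csSup_mem hne hbdd)
  exact ⟨h.trans h₁, fun j hj => h₂ j (hj.trans h)⟩

lemma kbar_le_min (x y : V q) : kbar x y ≤ min x.2 y.2 := (le_kbar_iff.1 le_rfl).1

lemma kbar_le_left (x y : V q) : kbar x y ≤ x.2 := (kbar_le_min x y).trans (min_le_left _ _)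

lemma kbar_le_right (x y : V q) : kbar x y ≤ y.2 := (kbar_le_min x y).trans (min_le_right _ _)

lemma digit_eq_of_le_kbar {x y : V q} {j : ℤ} (h : j ≤ kbar x y) : x.digit j = y.digit j :=
  (le_kbar_iff.1 le_rfl).2 j h

lemma kbar_comm (x y : V q) : kbar x y = kbar y x :=
  eq_of_forall_le_iff fun ℓ => by
    simp only [le_kbar_iff, min_comm x.2, eq_comm (a := x.digit _)]

lemma min_kbar_le_kbar (x y z : V q) : min (kbar x y) (kbar y z) ≤ kbar x z := by
  have := kbar_le_left x y
  have := kbar_le_right y z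
  refine le_kbar_iff.2 ⟨by omega, fun j hj => ?_⟩
  rw [digit_eq_of_le_kbar (hj.trans (min_le_left _ _)),
    digit_eq_of_le_kbar (hj.trans (min_le_right _ _))]

lemma digit_kbar_add_one_ne {x y : V q} (h : kbar x y < min x.2 y.2) :
    x.digit (kbar x y + 1) ≠ y.digit (kbar x y + 1) := fun heq => by
  have : kbar x y + 1 ≤ kbar x y := le_kbar_iff.2 ⟨h, fun j hj => by
    rcases hj.lt_or_eq with hj | rfl
    exacts [digit_eq_of_le_kbar (by omega), heq]⟩
  omega

lemma eq_of_hor_le_kbar {x y : V q} (h₂ : x.2 = y.2) (h : x.2 ≤ kbar x y) : x = y :=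
  ext_digit h₂ fun _ hj => digit_eq_of_le_kbar ((h₂ ▸ hj).trans h)

lemma up_eq_of_up_lt {x v y : V q} (hhor : hor x = hor v) (h : up x v < up x y) :
    up v y = up x y ∧ up y v = up y x := by
  have hlt : kbar x y < kbar x v := by unfold up at h; omega
  have hxv := min_kbar_le_kbar x v y
  have hvx := min_kbar_le_kbar v x y
  rw [kbar_comm v x] at hvx
  have hk : kbar v y = kbar x y := by omega
  unfold up hor at *
  rw [kbar_comm y v, kbar_comm y x]
  omega

/-- The automorphisms of `T_q` that fix the end `ω` and shift horocycles by `c`. -/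
def IsShiftAut (φ : V q ≃ V q) (c : ℤ) : Prop :=
  (∀ z, (φ z).2 = z.2 + c) ∧ ∀ z w, kbar (φ z) (φ w) = kbar z w + c

lemma IsShiftAut.up_apply {φ : V q ≃ V q} {c : ℤ} (h : IsShiftAut φ c) (z w : V q) :
    up (φ z) (φ w) = up z w := by
  simp only [up, h.1, h.2]
  ring

lemma isShiftAut_refl : IsShiftAut (Equiv.refl (V q)) 0 :=
  ⟨fun _ => (add_zero _).symm, fun _ _ => (add_zero _).symm⟩

lemma IsShiftAut.trans {φ ψ : V q ≃ V q} {c d : ℤ} (hφ : IsShiftAut φ c)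
    (hψ : IsShiftAut ψ d) : IsShiftAut (φ.trans ψ) (c + d) :=
  ⟨fun z => by simp only [Equiv.trans_apply, hψ.1, hφ.1, add_assoc],
    fun z w => by simp only [Equiv.trans_apply, hψ.2, hφ.2, add_assoc]⟩

lemma IsShiftAut.of_agree {φ : V q ≃ V q} {c : ℤ} (hhor : ∀ z, (φ z).2 = z.2 + c)
    (hagree : ∀ z w ℓ, ℓ ≤ min z.2 w.2 →
      ((∀ j ≤ ℓ + c, (φ z).digit j = (φ w).digit j) ↔ ∀ j ≤ ℓ, z.digit j = w.digit j)) :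
    IsShiftAut φ c := by
  refine ⟨hhor, fun z w => eq_of_forall_le_iff fun m => ?_⟩
  rw [le_kbar_iff, hhor, hhor, ← sub_le_iff_le_add, le_kbar_iff,
    show m ≤ min (z.2 + c) (w.2 + c) ↔ m - c ≤ min z.2 w.2 by omega]
  refine and_congr_right fun hm => ?_
  rw [← hagree z w _ hm, sub_add_cancel]

lemma finite_support_comp_sub {f : ℤ → ZMod q} (hf : (Function.support f).Finite) (c : ℤ) :
    (Function.support fun j => f (j - c)).Finite :=
  hf.preimage (sub_left_injective.injOn)

def translateFun (g : ℤ → ZMod q) (hg : (Function.support g).Finite) (c : ℤ) (x : V q) :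
    V q :=
  mk (fun j => x.digit (j - c) + g j)
    (((finite_support_comp_sub x.finite_support_digit c).union hg).subset
      (Function.support_add _ _)) (x.2 + c)

lemma digit_translateFun {g : ℤ → ZMod q} {hg : (Function.support g).Finite} {c j : ℤ}
    {x : V q} (hj : j ≤ x.2 + c) :
    (translateFun g hg c x).digit j = x.digit (j - c) + g j :=
  digit_mk hj

lemma translateFun_translateFun {g g' : ℤ → ZMod q} {hg : (Function.support g).Finite}
    {hg' : (Function.support g').Finite} {c c' : ℤ} (hc : c + c' = 0)
    (hgg' : ∀ j, g (j - c') + g' j = 0) (x : V q) :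
    translateFun g' hg' c' (translateFun g hg c x) = x := by
  refine ext_digit (by change x.2 + c + c' = x.2; omega) fun j hj => ?_
  rw [digit_translateFun (by change j ≤ x.2 + c + c'; omega),
    digit_translateFun (by omega), add_assoc, hgg', add_zero,
    show j - c' - c = j by omega]

def translate (g : ℤ → ZMod q) (hg : (Function.support g).Finite) (c : ℤ) : V q ≃ V q where
  toFun := translateFun g hg c
  invFun := translateFun (fun j => -g (j + c))
    ((finite_support_comp_sub hg (-c)).subset fun j => by simp [sub_eq_add_neg]) (-c)
  left_inv := translateFun_translateFun (add_neg_cancel c) fun j => by simp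
  right_inv := translateFun_translateFun (neg_add_cancel c) fun j => by simp

lemma translate_apply (g : ℤ → ZMod q) (hg : (Function.support g).Finite) (c : ℤ) (x : V q) :
    translate g hg c x = translateFun g hg c x := rfl

lemma isShiftAut_translate (g : ℤ → ZMod q) (hg : (Function.support g).Finite) (c : ℤ) :
    IsShiftAut (translate g hg c) c := by
  refine .of_agree (fun _ => rfl) fun z w ℓ hℓ => ⟨fun h j hj => ?_, fun h j hj => ?_⟩
  · have := h (j + c) (by omega)
    rw [translate_apply, translate_apply, digit_translateFun (by omega),
      digit_translateFun (by omega), add_sub_cancel_right] at this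
    exact add_right_cancel this
  · rw [translate_apply, translate_apply, digit_translateFun (by omega),
      digit_translateFun (by omega), h _ (by omega)]

lemma exists_isShiftAut_apply_eq (a a' : V q) :
    ∃ φ : V q ≃ V q, IsShiftAut φ (a'.2 - a.2) ∧ φ a = a' := by
  have hg := (a'.finite_support_digit.union
    (finite_support_comp_sub a.finite_support_digit (a'.2 - a.2))).subset
    (Function.support_sub _ _)
  refine ⟨translate _ hg _, isShiftAut_translate _ hg _,
    ext_digit (by change a.2 + (a'.2 - a.2) = a'.2; omega) fun j hj => ?_⟩
  rw [translate_apply, digit_translateFun (by omega)]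
  ring

open Classical in
noncomputable def permDigitFun (j₀ : ℤ) (P : ℤ → ZMod q) (π : Equiv.Perm (ZMod q)) (x : V q) :
    V q :=
  if ∀ i < j₀, x.digit i = P i then
    mk (Function.update x.digit j₀ (π (x.digit j₀)))
      ((x.finite_support_digit.insert j₀).subset fun j hj => (eq_or_ne j j₀).imp id fun h => by
        rwa [Function.mem_support, Function.update_of_ne h] at hj) x.2
  else x

section permDigit

variable {j₀ : ℤ} {P : ℤ → ZMod q} {π : Equiv.Perm (ZMod q)}

lemma permDigitFun_snd (x : V q) : (permDigitFun j₀ P π x).2 = x.2 := by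
  unfold permDigitFun
  split_ifs <;> rfl

open Classical in
lemma digit_permDigitFun {x : V q} {j : ℤ} (hj : j ≤ x.2) :
    (permDigitFun j₀ P π x).digit j =
      if j = j₀ ∧ ∀ i < j₀, x.digit i = P i then π (x.digit j) else x.digit j := by
  unfold permDigitFun
  by_cases hx : ∀ i < j₀, x.digit i = P i
  · rw [if_pos hx, digit_mk hj, Function.update_apply]
    by_cases h : j = j₀
    · rw [if_pos h, if_pos ⟨h, hx⟩, h]
    · rw [if_neg h, if_neg fun hc => h hc.1]
  · rw [if_neg hx, if_neg fun hc => hx hc.2]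

lemma digit_permDigitFun_of_ne {x : V q} {j : ℤ} (h : j ≠ j₀) :
    (permDigitFun j₀ P π x).digit j = x.digit j := by
  rcases le_or_gt j x.2 with hj | hj
  · rw [digit_permDigitFun hj, if_neg fun hc => h hc.1]
  · rw [digit_of_lt hj, digit_of_lt (by rwa [permDigitFun_snd])]

lemma permDigitFun_eq_self {x : V q}
    (h : (∀ i < j₀, x.digit i = P i) → j₀ ≤ x.2 → π (x.digit j₀) = x.digit j₀) :
    permDigitFun j₀ P π x = x := by
  refine ext_digit (permDigitFun_snd x) fun j hj => ?_
  rw [digit_permDigitFun hj]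
  split_ifs with hc
  · obtain ⟨rfl, hm⟩ := hc
    exact h hm hj
  · rfl

lemma permDigitFun_permDigitFun {π' : Equiv.Perm (ZMod q)} (hπ : ∀ a, π' (π a) = a)
    (x : V q) : permDigitFun j₀ P π' (permDigitFun j₀ P π x) = x := by
  have hm : (∀ i < j₀, (permDigitFun j₀ P π x).digit i = P i) ↔ ∀ i < j₀, x.digit i = P i :=
    forall₂_congr fun i hi => by rw [digit_permDigitFun_of_ne hi.ne]
  refine ext_digit ((permDigitFun_snd _).trans (permDigitFun_snd x)) fun j hj => ?_
  rw [digit_permDigitFun (by rwa [permDigitFun_snd]), digit_permDigitFun hj, hm]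
  split_ifs with hc
  · rw [hc.1, hπ]
  · rfl

end permDigit

noncomputable def permDigit (j₀ : ℤ) (P : ℤ → ZMod q) (π : Equiv.Perm (ZMod q)) : V q ≃ V q where
  toFun := permDigitFun j₀ P π
  invFun := permDigitFun j₀ P π.symm
  left_inv := permDigitFun_permDigitFun π.symm_apply_apply
  right_inv := permDigitFun_permDigitFun π.apply_symm_apply

lemma permDigit_apply (j₀ : ℤ) (P : ℤ → ZMod q) (π : Equiv.Perm (ZMod q)) (x : V q) :
    permDigit j₀ P π x = permDigitFun j₀ P π x := rfl

lemma isShiftAut_permDigit (j₀ : ℤ) (P : ℤ → ZMod q) (π : Equiv.Perm (ZMod q)) :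
    IsShiftAut (permDigit j₀ P π) 0 := by
  refine .of_agree (fun x => (permDigitFun_snd x).trans (add_zero _).symm)
    fun z w ℓ hℓ => ?_
  simp only [add_zero, permDigit_apply]
  have key : (∀ j < j₀, z.digit j = w.digit j) → j₀ ≤ ℓ →
      ((permDigitFun j₀ P π z).digit j₀ = (permDigitFun j₀ P π w).digit j₀ ↔
        z.digit j₀ = w.digit j₀) := by
    intro hlow hj₀
    have hm : (∀ i < j₀, z.digit i = P i) ↔ ∀ i < j₀, w.digit i = P i :=
      forall₂_congr fun i hi => by rw [hlow i hi]
    rw [digit_permDigitFun (by omega), digit_permDigitFun (by omega), hm]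
    split_ifs
    exacts [π.injective.eq_iff, Iff.rfl]
  constructor
  · intro h j hj
    rcases eq_or_ne j j₀ with rfl | hne
    · refine (key (fun i hi => ?_) hj).1 (h j hj)
      simpa only [digit_permDigitFun_of_ne hi.ne] using h i (by omega)
    · simpa only [digit_permDigitFun_of_ne hne] using h j hj
  · intro h j hj
    rcases eq_or_ne j j₀ with rfl | hne
    · exact (key (fun i hi => h i (by omega)) hj).2 (h j hj)
    · rw [digit_permDigitFun_of_ne hne, digit_permDigitFun_of_ne hne, h j hj]

lemma exists_isShiftAut_fix_apply_eq {a b b' : V q} (hlev : b.2 = b'.2)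
    (hk : kbar a b = kbar a b') :
    ∃ φ : V q ≃ V q, IsShiftAut φ 0 ∧ φ a = a ∧ φ b = b' := by
  obtain ⟨n, hn⟩ : ∃ n : ℕ, b.2 - kbar b b' ≤ n := ⟨_, Int.self_le_toNat _⟩
  induction n generalizing b with
  | zero => exact ⟨Equiv.refl _, isShiftAut_refl, rfl, (eq_of_hor_le_kbar hlev (by omega) :)⟩
  | succ n ih =>
    by_cases hbb : b.2 ≤ kbar b b'
    · exact ⟨Equiv.refl _, isShiftAut_refl, rfl, (eq_of_hor_le_kbar hlev hbb :)⟩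
    set j₀ := kbar b b' + 1 with hj₀
    set ψ := permDigit j₀ b.digit (Equiv.swap (b.digit j₀) (b'.digit j₀))
    have hψ : IsShiftAut ψ 0 := isShiftAut_permDigit _ _ _
    have hψb₂ : (ψ b).2 = b.2 := permDigitFun_snd b
    have hab : kbar a b ≤ kbar b b' := by
      simpa [kbar_comm b a, hk] using min_kbar_le_kbar b a b'
    -- Either `a` leaves the branch of `b` below level `j₀`, or `kbar a b = kbar b b'` and the
    -- digit of `a` at level `j₀` differs from both swapped digits.
    have hψa : ψ a = a := by
      refine permDigitFun_eq_self fun ha hj₀a => ?_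
      have hab' : kbar a b = kbar b b' :=
        hab.antisymm (not_lt.1 fun hlt => digit_kbar_add_one_ne (by omega) (ha _ (by omega)))
      have hne := digit_kbar_add_one_ne (x := a) (y := b) (by omega)
      have hne' := digit_kbar_add_one_ne (x := a) (y := b') (by omega)
      rw [hab'] at hne
      rw [← hk, hab'] at hne'
      exact Equiv.swap_apply_of_ne_of_ne hne hne'
    have hψbb' : j₀ ≤ kbar (ψ b) b' := by
      refine le_kbar_iff.2 ⟨by omega, fun j hj => ?_⟩
      rw [permDigit_apply]
      rcases hj.lt_or_eq with hj | rfl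
      · rw [digit_permDigitFun_of_ne hj.ne]
        exact digit_eq_of_le_kbar (by omega)
      · rw [digit_permDigitFun (by omega), if_pos ⟨rfl, fun _ _ => rfl⟩, Equiv.swap_apply_left]
    have hk' : kbar a (ψ b) = kbar a b' := by
      have := hψ.2 a b
      rwa [hψa, add_zero, hk] at this
    obtain ⟨φ, hφ, hφa, hφb⟩ := ih (hψb₂.trans hlev) hk' (by omega)
    exact ⟨ψ.trans φ, zero_add (0 : ℤ) ▸ hψ.trans hφ,
      by rw [Equiv.trans_apply, hψa, hφa], hφb⟩

theorem exists_isShiftAut_apply_eq_pair {a b a' b' : V q} (h₁ : up a b = up a' b')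
    (h₂ : up b a = up b' a') :
    ∃ φ : V q ≃ V q, IsShiftAut φ (a'.2 - a.2) ∧ φ a = a' ∧ φ b = b' := by
  obtain ⟨τ, hτ, hτa⟩ := exists_isShiftAut_apply_eq a a'
  unfold up at h₁ h₂
  rw [kbar_comm b, kbar_comm b'] at h₂
  obtain ⟨σ, hσ, hσa, hσb⟩ := exists_isShiftAut_fix_apply_eq (a := a') (b := τ b) (b' := b')
    (by rw [hτ.1]; omega) (by rw [← hτa, hτ.2, hτa]; omega)
  exact ⟨τ.trans σ, add_zero (a'.2 - a.2) ▸ hτ.trans hσ,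
    by rw [Equiv.trans_apply, hτa, hσa], hσb⟩

end V

namespace DL

variable {q r : ℕ}

def PreservesUp (Φ : DL q r ≃ DL q r) : Prop :=
  ∀ z w : DL q r, up (Φ z).1.1 (Φ w).1.1 = up z.1.1 w.1.1 ∧ up (Φ z).1.2 (Φ w).1.2 = up z.1.2 w.1.2

def prodAut {φ₁ : V q ≃ V q} {φ₂ : V r ≃ V r} {c : ℤ} (h₁ : V.IsShiftAut φ₁ c)
    (h₂ : V.IsShiftAut φ₂ (-c)) : DL q r ≃ DL q r :=
  (φ₁.prodCongr φ₂).subtypeEquiv fun z => by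
    simp only [hor, Equiv.prodCongr_apply, Prod.map, h₁.1, h₂.1]
    omega

lemma exists_preservesUp_apply_eq_pair {x y x' y' : DL q r}
    (e₁ : up x.1.1 y.1.1 = up x'.1.1 y'.1.1) (e₂ : up y.1.1 x.1.1 = up y'.1.1 x'.1.1)
    (e₃ : up x.1.2 y.1.2 = up x'.1.2 y'.1.2) (e₄ : up y.1.2 x.1.2 = up y'.1.2 x'.1.2) :
    ∃ Φ : DL q r ≃ DL q r, PreservesUp Φ ∧ Φ x = x' ∧ Φ y = y' := by
  obtain ⟨φ₁, h₁, hx₁, hy₁⟩ := V.exists_isShiftAut_apply_eq_pair e₁ e₂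
  obtain ⟨φ₂, h₂, hx₂, hy₂⟩ := V.exists_isShiftAut_apply_eq_pair e₃ e₄
  have hc : x'.1.2.2 - x.1.2.2 = -(x'.1.1.2 - x.1.1.2) := by
    have hx : x.1.1.2 + x.1.2.2 = 0 := x.2
    have hx' : x'.1.1.2 + x'.1.2.2 = 0 := x'.2
    omega
  rw [hc] at h₂
  exact ⟨prodAut h₁ h₂, fun z w => ⟨h₁.up_apply _ _, h₂.up_apply _ _⟩,
    Subtype.ext (Prod.ext hx₁ hx₂), Subtype.ext (Prod.ext hy₁ hy₂)⟩

theorem _root_.semiIsoDL_iff {α : Type*} {κ : DL q r → DL q r → α} :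
    SemiIsoDL κ ↔ ∀ Φ, PreservesUp Φ → ∀ z w, κ (Φ z) (Φ w) = κ z w := by
  refine ⟨fun hκ Φ hΦ z w => hκ _ _ _ _ (hΦ z w).1 (hΦ w z).1 (hΦ z w).2 (hΦ w z).2,
    fun h x y x' y' e₁ e₂ e₃ e₄ => ?_⟩
  obtain ⟨Φ, hΦ, rfl, rfl⟩ := exists_preservesUp_apply_eq_pair e₁ e₂ e₃ e₄
  exact (h Φ hΦ x y).symm

end DL

theorem green_semiIso_general (q r : ℕ)
    (p : DL q r → DL q r → ℝ) (hsi : SemiIsoDL p) :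
    (∀ n : ℕ, SemiIsoDL (pstep p n)) ∧ SemiIsoDL (Green p) ∧
      ∀ x v y : DL q r, x.1.2 = v.1.2 → hor x.1.1 = hor v.1.1 →
        up x.1.1 v.1.1 < up x.1.1 y.1.1 → Green p x y = Green p v y := by
  have hinv := semiIsoDL_iff.1 hsi
  have hG : SemiIsoDL (Green p) :=
    semiIsoDL_iff.2 fun Φ hΦ => green_apply_equiv (hinv Φ hΦ)
  refine ⟨fun n => semiIsoDL_iff.2 fun Φ hΦ => pstep_apply_equiv (hinv Φ hΦ) n, hG,
    fun x v y h₂ hhor hup => ?_⟩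
  obtain ⟨e₁, e₂⟩ := V.up_eq_of_up_lt hhor hup
  exact hG x y v y e₁.symm e₂.symm (by rw [h₂]) (by rw [h₂])

/-- For a semi-isotropic transition matrix on `DL(q,r)`, all
`n`-step transition probabilities and the Green kernel depend only on the
quadruple `(up(x₁,y₁), up(y₁,x₁), up(x₂,y₂), up(y₂,x₂))`; in particular, if
`x = x₁x₂`, `v = v₁x₂` with `hor(x₁) = hor(v₁)` and `up(x₁,y₁) > up(x₁,v₁)`,
then `G(x,y) = G(v,y)`. -/
theorem green_semiIso (q r : ℕ) (hq : 2 ≤ q) (hr : 2 ≤ r)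
    (p : DL q r → DL q r → ℝ) (hp : IsTransMat p) (hsi : SemiIsoDL p) :
    (∀ n : ℕ, SemiIsoDL (pstep p n)) ∧ SemiIsoDL (Green p) ∧
      ∀ x v y : DL q r, x.1.2 = v.1.2 → hor x.1.1 = hor v.1.1 →
        up x.1.1 v.1.1 < up x.1.1 y.1.1 → Green p x y = Green p v y :=
  green_semiIso_general q r p hsi
end

section
/- Let μ̃ be a probability measure on ℤ such that the translation-invariant random walk p̃(k,l) = μ̃(l−k) on ℤ is irreducible, and let φ(c) = ∑_{n∈ℤ} μ̃(n)e^{cn}. Then a function f : ℤ → (0,∞) with f(0) = 1 is a minimal harmonic function for p̃ if and only if there exists c ∈ ℝ with φ(c) = 1 and f(m) = e^{cm} for all m ∈ ℤ. -/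
open Filter Topology ENNReal

/-!
Conjugating by the candidate exponential reduces minimality to the Choquet–Deny theorem:
if `f` is multiplicative with `∑ μ(n) f(n) = 1`, then for harmonic `0 < h₁ ≤ f` the ratio
`h₁ / f` is a `[0,1]`-valued harmonic function of the walk with step law `μ(n) f(n)`, hence
constant.
Conversely, for a minimal `f` and `μ(a) > 0` the function `x ↦ μ(a) f(x + a)` is harmonic and
dominated by `f`, so it is a multiple of `f`; this makes `f` multiplicative on the semigroup
generated by the support of `μ`, which is all of `ℤ` by irreducibility.
-/

section RandomWalk

variable {G : Type*} [AddCommGroup G]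

def walkKernel (ν : G → ℝ) (x y : G) : ℝ := ν (y - x)

@[simp]
lemma walkKernel_apply (ν : G → ℝ) (x y : G) : walkKernel ν x y = ν (y - x) := rfl

lemma hasSum_walkKernel {ν : G → ℝ} {s : ℝ} (hν : HasSum ν s) (x : G) :
    HasSum (walkKernel ν x) s :=
  (Equiv.subRight x).hasSum_iff.mpr hν

lemma pstep_nonneg {X : Type*} {p : X → X → ℝ} (hp : ∀ x y, 0 ≤ p x y) :
    ∀ n x y, 0 ≤ pstep p n x y
  | 0, x, y => by rw [pstep]; split_ifs <;> norm_num
  | n + 1, x, y => by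
    rw [pstep]
    exact tsum_nonneg fun z => mul_nonneg (pstep_nonneg hp n x z) (hp z y)

lemma sub_mem_closure_of_pstep_pos {ν : G → ℝ} (hν0 : ∀ a, 0 ≤ ν a) :
    ∀ {n : ℕ} {x y : G}, 0 < pstep (walkKernel ν) n x y →
      y - x ∈ AddSubmonoid.closure {a | 0 < ν a}
  | 0, x, y, h => by
    rw [pstep] at h
    split_ifs at h with hxy
    · simp [hxy]
    · exact absurd h (lt_irrefl 0)
  | n + 1, x, y, h => by
    rw [pstep] at h
    obtain ⟨z, hz⟩ : ∃ z, 0 < pstep (walkKernel ν) n x z * ν (y - z) := by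
      by_contra! hall
      exact h.not_ge (tsum_nonpos hall)
    have hxz := pos_of_mul_pos_left hz (hν0 _)
    have hzy := pos_of_mul_pos_right hz (pstep_nonneg (fun _ _ => hν0 _) n x z)
    rw [← sub_add_sub_cancel y z x]
    exact add_mem (AddSubmonoid.subset_closure hzy) (sub_mem_closure_of_pstep_pos hν0 hxz)

lemma closure_support_eq_top_of_isIrredMat {ν : G → ℝ} (hν0 : ∀ a, 0 ≤ ν a)
    (hirr : IsIrredMat (walkKernel ν)) : AddSubmonoid.closure {a | 0 < ν a} = ⊤ := by
  refine eq_top_iff.mpr fun x _ => ?_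
  obtain ⟨n, hn⟩ := hirr 0 x
  simpa using sub_mem_closure_of_pstep_pos hν0 hn

namespace IsHarmonic

variable {X : Type*} {p : X → X → ℝ} {h h' : X → ℝ}

lemma sub (hh : IsHarmonic p h) (hh' : IsHarmonic p h') : IsHarmonic p (h - h') := fun x => by
  simpa only [Pi.sub_apply, mul_sub] using (hh x).sub (hh' x)

lemma const_mul (hh : IsHarmonic p h) (c : ℝ) : IsHarmonic p fun x => c * h x := fun x => by
  simpa only [mul_left_comm] using (hh x).mul_left c

lemma kernel_mul_le (hh : IsHarmonic p h) (hp : ∀ x y, 0 ≤ p x y) (h0 : ∀ y, 0 ≤ h y)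
    (x y : X) : p x y * h y ≤ h x :=
  le_hasSum (hh x) y fun z _ => mul_nonneg (hp x z) (h0 z)

end IsHarmonic

lemma isHarmonic_const {ν : G → ℝ} (hν : HasSum ν 1) (c : ℝ) :
    IsHarmonic (walkKernel ν) fun _ => c :=
  fun x => by simpa using (hasSum_walkKernel hν x).mul_right c

lemma IsHarmonic.comp_add_right {ν h : G → ℝ} (hh : IsHarmonic (walkKernel ν) h) (t : G) :
    IsHarmonic (walkKernel ν) fun x => h (x + t) := fun x => by
  simpa [Function.comp_def] using (Equiv.addRight t).hasSum_iff.mpr (hh (x + t))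

lemma IsHarmonic.div_of_map_add {ν χ h : G → ℝ} (hχ : ∀ x y, χ (x + y) = χ x * χ y)
    (hχ0 : ∀ x, χ x ≠ 0) (hh : IsHarmonic (walkKernel ν) h) :
    IsHarmonic (walkKernel fun n => ν n * χ n) fun x => h x / χ x := fun x => by
  refine ((hh x).div_const (χ x)).congr_fun fun y => ?_
  have hy : χ y = χ (y - x) * χ x := by rw [← hχ, sub_add_cancel]
  simp only [walkKernel_apply]
  rw [hy]
  field_simp [hχ0]

lemma isHarmonic_of_hasSum_mul {ν χ : G → ℝ} (hχ : ∀ x y, χ (x + y) = χ x * χ y)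
    (hsum : HasSum (fun n => ν n * χ n) 1) : IsHarmonic (walkKernel ν) χ := fun x => by
  refine (one_mul (χ x) ▸ (hasSum_walkKernel hsum x).mul_right (χ x)).congr_fun fun y => ?_
  simp only [walkKernel_apply, mul_assoc, ← hχ, sub_add_cancel]

section ChoquetDeny

variable {ν : G → ℝ}

lemma IsHarmonic.pow_mul_sub_le (hν0 : ∀ a, 0 ≤ ν a) (hν1 : HasSum ν 1) {D : G → ℝ}
    {s : ℝ} (hD : IsHarmonic (walkKernel ν) D)
    (hDs : ∀ x, D x ≤ s) (a x : G) (j : ℕ) :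
    ν a ^ j * (s - D (x + j • a)) ≤ s - D x := by
  have hsD : IsHarmonic (walkKernel ν) fun y => s - D y := (isHarmonic_const hν1 s).sub hD
  induction j with
  | zero => simp
  | succ j ih =>
    have step := hsD.kernel_mul_le (fun _ _ => hν0 _) (fun y => sub_nonneg.2 (hDs y))
      (x + j • a) (x + (j + 1) • a)
    have hstep : x + (j + 1) • a - (x + j • a) = a := by rw [succ_nsmul]; abel
    rw [walkKernel_apply, hstep] at step
    calc ν a ^ (j + 1) * (s - D (x + (j + 1) • a))
        = ν a ^ j * (ν a * (s - D (x + (j + 1) • a))) := by ring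
      _ ≤ ν a ^ j * (s - D (x + j • a)) := by gcongr; exact pow_nonneg (hν0 a) j
      _ ≤ s - D x := ih

lemma IsHarmonic.apply_add_le (hν0 : ∀ a, 0 ≤ ν a) (hν1 : HasSum ν 1) {g : G → ℝ}
    (hg : IsHarmonic (walkKernel ν) g) (hg0 : ∀ x, 0 ≤ g x) (hg1 : ∀ x, g x ≤ 1) {a : G}
    (ha : 0 < ν a) (x : G) : g (x + a) ≤ g x := by
  set D : G → ℝ := fun y => g (y + a) - g y
  have hD : IsHarmonic (walkKernel ν) D := (hg.comp_add_right a).sub hg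
  have hbdd : BddAbove (Set.range D) :=
    ⟨1, Set.forall_mem_range.2 fun y => by linarith [hg1 (y + a), hg0 y]⟩
  set s := ⨆ y, D y
  have hDs : ∀ y, D y ≤ s := le_ciSup hbdd
  suffices s ≤ 0 by linarith [hDs x]
  by_contra! hs
  obtain ⟨k, hk⟩ := exists_nat_gt (2 / s)
  have hνk : 0 < ν a ^ k := pow_pos ha k
  obtain ⟨m, hm⟩ : ∃ m, s - ν a ^ k * (s / 2) < D m :=
    exists_lt_of_lt_ciSup (by nlinarith)
  -- A near-maximum of `D` at `m` persists along `m, m + a, …, m + (k - 1) • a`,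
  -- so that `g` increases by more than `1` between `m` and `m + k • a`.
  have hlarge : ∀ j < k, s / 2 ≤ D (m + j • a) := by
    intro j hj
    have hprop := hD.pow_mul_sub_le hν0 hν1 hDs a m j
    have hpow : ν a ^ k ≤ ν a ^ j :=
      pow_le_pow_of_le_one ha.le (le_hasSum hν1 a fun b _ => hν0 b) hj.le
    nlinarith [hDs (m + j • a)]
  have htel : ∑ j ∈ Finset.range k, D (m + j • a) = g (m + k • a) - g m := by
    simpa [D, add_assoc, succ_nsmul] using Finset.sum_range_sub (fun j => g (m + j • a)) k
  have hsum : (k : ℝ) * (s / 2) ≤ g (m + k • a) - g m := by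
    calc (k : ℝ) * (s / 2) = ∑ j ∈ Finset.range k, s / 2 := by simp
      _ ≤ _ := Finset.sum_le_sum fun j hj => hlarge j (Finset.mem_range.1 hj)
      _ = _ := htel
  have hks : 2 < k * s := (div_lt_iff₀ hs).1 hk
  linarith [hg1 (m + k • a), hg0 m]

lemma IsHarmonic.apply_add_eq (hν0 : ∀ a, 0 ≤ ν a) (hν1 : HasSum ν 1) {g : G → ℝ}
    (hg : IsHarmonic (walkKernel ν) g) (hg0 : ∀ x, 0 ≤ g x) (hg1 : ∀ x, g x ≤ 1) {a : G}
    (ha : 0 < ν a) (x : G) : g (x + a) = g x := by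
  have hle := hg.apply_add_le hν0 hν1 hg0 hg1 ha x
  have hge := ((isHarmonic_const hν1 1).sub hg).apply_add_le hν0 hν1
    (fun y => sub_nonneg.2 (hg1 y)) (fun y => by simp [hg0 y]) ha x
  simp only [Pi.sub_apply] at hge
  linarith

theorem IsHarmonic.eq_apply_zero_of_closure_eq_top (hν0 : ∀ a, 0 ≤ ν a) (hν1 : HasSum ν 1)
    (hirr : AddSubmonoid.closure {a | 0 < ν a} = ⊤) {g : G → ℝ}
    (hg : IsHarmonic (walkKernel ν) g) (hg0 : ∀ x, 0 ≤ g x) (hg1 : ∀ x, g x ≤ 1) (x : G) :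
    g x = g 0 := by
  have hx : x ∈ AddSubmonoid.closure {a | 0 < ν a} := hirr ▸ AddSubmonoid.mem_top x
  suffices ∀ m, g (m + x) = g m by simpa using this 0
  induction hx using AddSubmonoid.closure_induction with
  | mem a ha => exact hg.apply_add_eq hν0 hν1 hg0 hg1 ha
  | zero => simp
  | add a b _ _ iha ihb => intro m; rw [← add_assoc, ihb, iha]

end ChoquetDeny

namespace IsMinimalHarmonic

variable {ν f : G → ℝ}

lemma map_add_of_pos (hf : IsMinimalHarmonic (walkKernel ν) 0 f) (hν0 : ∀ a, 0 ≤ ν a) {a : G}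
    (ha : 0 < ν a) (x : G) : f (x + a) = f a * f x := by
  obtain ⟨hharm, hpos, hf0, hmin⟩ := hf
  obtain ⟨c, hc⟩ := hmin (fun y => ν a * f (y + a)) ((hharm.comp_add_right a).const_mul (ν a))
    (fun y => mul_pos ha (hpos _)) fun y => by
      simpa using hharm.kernel_mul_le (fun _ _ => hν0 _) (fun z => (hpos z).le) y (y + a)
  have hc0 : ν a * f a = c := by simpa [hf0] using hc 0
  refine mul_left_cancel₀ ha.ne' ?_
  rw [hc x, ← hc0, mul_assoc]

lemma map_add (hf : IsMinimalHarmonic (walkKernel ν) 0 f) (hν0 : ∀ a, 0 ≤ ν a)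
    (hirr : AddSubmonoid.closure {a | 0 < ν a} = ⊤) (x y : G) : f (x + y) = f x * f y := by
  have hy : y ∈ AddSubmonoid.closure {a | 0 < ν a} := hirr ▸ AddSubmonoid.mem_top y
  rw [mul_comm]
  induction hy using AddSubmonoid.closure_induction generalizing x with
  | mem a ha => exact hf.map_add_of_pos hν0 ha x
  | zero => simp [hf.2.2.1]
  | add a b _ _ iha ihb => rw [← add_assoc, ihb, iha, ihb a]; ring

end IsMinimalHarmonic

theorem isMinimalHarmonic_walkKernel_iff {ν f : G → ℝ} (hν0 : ∀ a, 0 ≤ ν a)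
    (hirr : AddSubmonoid.closure {a | 0 < ν a} = ⊤) (hf : ∀ x, 0 < f x) (hf0 : f 0 = 1) :
    IsMinimalHarmonic (walkKernel ν) 0 f ↔
      HasSum (fun x => ν x * f x) 1 ∧ ∀ x y, f (x + y) = f x * f y := by
  refine ⟨fun hmin => ⟨by simpa [hf0] using hmin.1 0, hmin.map_add hν0 hirr⟩, ?_⟩
  rintro ⟨hsum, hmul⟩
  refine ⟨isHarmonic_of_hasSum_mul hmul hsum, hf, hf0,
    fun h₁ hh₁ hpos hle => ⟨h₁ 0, fun x => ?_⟩⟩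
  have hsupp : {a | 0 < ν a * f a} = {a | 0 < ν a} := by
    ext a
    simp [mul_pos_iff_of_pos_right (hf a)]
  have hconst := (hh₁.div_of_map_add hmul fun y => (hf y).ne').eq_apply_zero_of_closure_eq_top
    (fun n => mul_nonneg (hν0 n) (hf n).le) hsum (hsupp ▸ hirr)
    (fun y => (div_pos (hpos y) (hf y)).le) (fun y => (div_le_one (hf y)).2 (hle y)) x
  rwa [hf0, div_one, div_eq_iff (hf x).ne'] at hconst

end RandomWalk

lemma exists_eq_exp_mul_of_map_add {f : ℤ → ℝ} (hf : ∀ m, 0 < f m)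
    (hmul : ∀ m n, f (m + n) = f m * f n) : ∃ c : ℝ, ∀ m : ℤ, f m = Real.exp (c * m) := by
  let logf : ℤ →+ ℝ := AddMonoidHom.mk' (fun m => Real.log (f m)) fun m n => by
    rw [hmul, Real.log_mul (hf m).ne' (hf n).ne']
  refine ⟨logf 1, fun m => ?_⟩
  have hlin : logf m = m * logf 1 := by
    simpa only [smul_eq_mul, mul_one, zsmul_eq_mul] using logf.map_zsmul m 1
  rw [mul_comm, ← hlin]
  exact (Real.exp_log (hf m)).symm

theorem minimal_harmonic_Z_iff_exp_general (μ : ℤ → ℝ) (hμ0 : ∀ n, 0 ≤ μ n)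
    (hirr : IsIrredMat (fun k l : ℤ => μ (l - k)))
    (f : ℤ → ℝ) (hf : ∀ m, 0 < f m) (hf0 : f 0 = 1) :
    IsMinimalHarmonic (fun k l : ℤ => μ (l - k)) 0 f ↔
      ∃ c : ℝ, HasSum (fun n : ℤ => μ n * Real.exp (c * n)) 1 ∧
        ∀ m : ℤ, f m = Real.exp (c * m) := by
  rw [show (fun k l : ℤ => μ (l - k)) = walkKernel μ from rfl] at hirr ⊢
  rw [isMinimalHarmonic_walkKernel_iff hμ0 (closure_support_eq_top_of_isIrredMat hμ0 hirr) hf hf0]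
  constructor
  · rintro ⟨hsum, hmul⟩
    obtain ⟨c, hc⟩ := exists_eq_exp_mul_of_map_add hf hmul
    exact ⟨c, by simpa only [hc] using hsum, hc⟩
  · rintro ⟨c, hsum, hc⟩
    refine ⟨by simpa only [hc] using hsum, fun m n => ?_⟩
    simp only [hc, Int.cast_add, mul_add, Real.exp_add]

/-- For an irreducible random walk `p̃(k,l) = μ̃(l-k)` on `ℤ`, a
positive function `f` with `f(0) = 1` is minimal harmonic iff `f(m) = e^{cm}`
for some `c ∈ ℝ` with `φ(c) = 1`, where `φ(c) = ∑_n μ̃(n)e^{cn}`. -/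
theorem minimal_harmonic_Z_iff_exp (μ : ℤ → ℝ) (hμ0 : ∀ n, 0 ≤ μ n)
    (hμ1 : HasSum μ 1)
    (hirr : IsIrredMat (fun k l : ℤ => μ (l - k)))
    (f : ℤ → ℝ) (hf : ∀ m, 0 < f m) (hf0 : f 0 = 1) :
    IsMinimalHarmonic (fun k l : ℤ => μ (l - k)) 0 f ↔
      ∃ c : ℝ, HasSum (fun n : ℤ => μ n * Real.exp (c * n)) 1 ∧
        ∀ m : ℤ, f m = Real.exp (c * m) :=
  minimal_harmonic_Z_iff_exp_general μ hμ0 hirr f hf hf0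
end
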